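/- arXiv:q-alg/9701035 — 2 statements merged into one kernel-verified Lean document; each statement's English description precedes it below -/
import Mathlib

section
/- Let R be a commutative ring and q, z_1, z_2, z_3 ∈ R. For a permutation σ in the symmetric group S_3, let sgn(σ) denote its sign and set P_σ = (z_{σ(1)} − (q + q²) z_{σ(2)} + q³ z_{σ(3)}) · ∏_{1 ≤ i < j ≤ 3} (q z_{σ(i)} − z_{σ(j)}). Then Σ_{σ ∈ S_3} sgn(σ) · P_σ = 0. -/
/-- The key antisymmetrization identity for the quantum Serre relation with
`A_{ij} = -2`: `∑_{σ ∈ S₃} sgn(σ) (z_{σ(1)} - (q + q²) z_{σ(2)} + q³ z_{σ(3)})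
∏_{1 ≤ i < j ≤ 3} (q z_{σ(i)} - z_{σ(j)}) = 0`. -/
theorem serre_antisymmetrization {R : Type*} [CommRing R] (q : R) (z : Fin 3 → R) :
    ∑ σ : Equiv.Perm (Fin 3), (Equiv.Perm.sign σ : ℤ) •
      ((z (σ 0) - (q + q ^ 2) * z (σ 1) + q ^ 3 * z (σ 2))
        * ((q * z (σ 0) - z (σ 1)) * (q * z (σ 0) - z (σ 2))
            * (q * z (σ 1) - z (σ 2)))) = 0 := by
  rw [show (Finset.univ : Finset (Equiv.Perm (Fin 3))) =
      {1, Equiv.swap 0 1, Equiv.swap 0 2, Equiv.swap 1 2, finRotate 3, (finRotate 3)⁻¹}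
      from by decide]
  rw [Finset.sum_insert (by decide), Finset.sum_insert (by decide),
    Finset.sum_insert (by decide), Finset.sum_insert (by decide),
    Finset.sum_insert (by decide), Finset.sum_singleton]
  simp only [show ∀ i, (1 : Equiv.Perm (Fin 3)) i = i from by decide,
    show ∀ i, Equiv.swap (0:Fin 3) 1 i = ![1,0,2] i from by decide,
    show ∀ i, Equiv.swap (0:Fin 3) 2 i = ![2,1,0] i from by decide,
    show ∀ i, Equiv.swap (1:Fin 3) 2 i = ![0,2,1] i from by decide,
    show ∀ i, (finRotate 3) i = ![1,2,0] i from by decide,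
    show ∀ i, (finRotate 3)⁻¹ i = ![2,0,1] i from by decide,
    show Equiv.Perm.sign (1 : Equiv.Perm (Fin 3)) = 1 from by decide,
    show Equiv.Perm.sign (Equiv.swap (0:Fin 3) 1) = -1 from by decide,
    show Equiv.Perm.sign (Equiv.swap (0:Fin 3) 2) = -1 from by decide,
    show Equiv.Perm.sign (Equiv.swap (1:Fin 3) 2) = -1 from by decide,
    show Equiv.Perm.sign (finRotate 3) = 1 from by decide,
    show Equiv.Perm.sign (finRotate 3)⁻¹ = 1 from by decide,
    Matrix.cons_val_zero, Matrix.cons_val_one, Matrix.head_cons,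
    Matrix.cons_val_two, Matrix.tail_cons, Units.val_one, Units.val_neg,
    one_smul, neg_smul, neg_neg]
  ring
end

section
/- Let R be a commutative ring and let ω ∈ R satisfy 1 + ω + ω² = 0 (ω is a primitive third root of unity). Then for all z_1, z_2, z_3 ∈ R: Σ_{σ ∈ S_3} sgn(σ) · ∏_{1 ≤ i < j ≤ 3} (ω z_{σ(i)} − z_{σ(j)}) = 0. -/
/-- If `ω` is a primitive third root of unity (`1 + ω + ω² = 0`), then
`∑_{σ ∈ S₃} sgn(σ) ∏_{1 ≤ i < j ≤ 3} (ω z_{σ(i)} - z_{σ(j)}) = 0`. -/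
theorem serre_antisymmetrization_root_of_unity {R : Type*} [CommRing R]
    (ω : R) (hω : 1 + ω + ω ^ 2 = 0) (z : Fin 3 → R) :
    ∑ σ : Equiv.Perm (Fin 3), (Equiv.Perm.sign σ : ℤ) •
      ((ω * z (σ 0) - z (σ 1)) * (ω * z (σ 0) - z (σ 2))
        * (ω * z (σ 1) - z (σ 2))) = 0 := by
  rw [show (Finset.univ : Finset (Equiv.Perm (Fin 3))) =
      {1, Equiv.swap 0 1, Equiv.swap 0 2, Equiv.swap 1 2,
        Equiv.swap 0 1 * Equiv.swap 1 2, Equiv.swap 0 2 * Equiv.swap 1 2} from by decide]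
  rw [Finset.sum_insert (by decide), Finset.sum_insert (by decide),
    Finset.sum_insert (by decide), Finset.sum_insert (by decide),
    Finset.sum_insert (by decide), Finset.sum_singleton]
  norm_num [Equiv.Perm.mul_apply, Equiv.swap_apply_def, Equiv.Perm.sign_swap,
    Equiv.Perm.sign_mul, Fin.ext_iff]
  linear_combination ((ω + 1) * (z 0 ^ 2 * z 1 - z 0 ^ 2 * z 2 - z 0 * z 1 ^ 2
    + z 1 ^ 2 * z 2 + z 0 * z 2 ^ 2 - z 1 * z 2 ^ 2)) * hω
end
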